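/- arXiv:1811.12137 — 5 statements merged into one kernel-verified Lean document; each statement's English description precedes it below -/
import Mathlib

section
/- Let R_rat(u) := Id − (ħ/u)·P. Then the fused product R_{23}(ħ)·R_{13}(2ħ)·R_{12}(ħ) (i.e. R_rat evaluated at the differences of the points z, z−ħ, z−2ħ) equals the antisymmetrizer A₃ = Σ_{σ∈S₃} sgn(σ)·P_σ acting on (ℂ^n)^{⊗3}, where P_σ permutes the tensor factors according to σ. -/
/-!
Since `σ ↦ P_σ` is multiplicative, this is an identity in the group algebra of `S₃`. Write `sᵢⱼ`
for the transposition of factors `i, j`. Expanding the product and using `s₁₂ s₀₂ = s₀₂ s₀₁` and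
`s₀₁² = 1`, the two products carrying a coefficient `½` become `s₀₂ s₀₁` and `s₀₂`; they merge
with the other terms and leave exactly one term `± P_σ` for each `σ ∈ S₃`, with the sign of `σ`.
-/

open Matrix Equiv

/-- The operator `P_σ` on `(ℂ^n)^{⊗3}` permuting the tensor factors according to `σ`:
`P_σ (v₁ ⊗ v₂ ⊗ v₃) = v_{σ⁻¹(1)} ⊗ v_{σ⁻¹(2)} ⊗ v_{σ⁻¹(3)}`, realized as a matrix
indexed by `Fin 3 → Fin n`. -/
noncomputable def permFactors (n : ℕ) (σ : Equiv.Perm (Fin 3)) :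
    Matrix (Fin 3 → Fin n) (Fin 3 → Fin n) ℂ :=
  Matrix.of fun i j => if i = fun a => j (σ⁻¹ a) then 1 else 0

/-- The antisymmetrizer `A₃ = Σ_{σ∈S₃} sgn(σ)·P_σ` on `(ℂ^n)^{⊗3}`. -/
noncomputable def antisym3 (n : ℕ) : Matrix (Fin 3 → Fin n) (Fin 3 → Fin n) ℂ :=
  ∑ σ : Equiv.Perm (Fin 3), ((Equiv.Perm.sign σ : ℤ) : ℂ) • permFactors n σ

theorem Equiv.Perm.sum_fin_three {M : Type*} [AddCommMonoid M] (f : Perm (Fin 3) → M) :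
    ∑ σ, f σ = f 1 + f (swap 0 1) + f (swap 0 2) + f (swap 1 2) +
      f (swap 0 2 * swap 0 1) + f (swap 1 2 * swap 0 1) := by
  have huniv : (Finset.univ : Finset (Perm (Fin 3))) =
      {1, swap 0 1, swap 0 2, swap 1 2, swap 0 2 * swap 0 1, swap 1 2 * swap 0 1} := by
    decide
  rw [huniv, Finset.sum_insert (by decide), Finset.sum_insert (by decide),
    Finset.sum_insert (by decide), Finset.sum_insert (by decide),
    Finset.sum_insert (by decide), Finset.sum_singleton]
  simp only [add_assoc]

section permFactors

variable (n : ℕ)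

theorem permFactors_one : permFactors n 1 = 1 := by
  ext i j
  simp [permFactors, Matrix.one_apply, funext_iff]

theorem permFactors_mul (σ τ : Perm (Fin 3)) :
    permFactors n σ * permFactors n τ = permFactors n (σ * τ) := by
  ext i j
  rw [Matrix.mul_apply, Finset.sum_eq_single (fun a => j (τ⁻¹ a))]
  · simp [permFactors, funext_iff]
  · intro k _ hk
    simp only [permFactors, Matrix.of_apply]
    rw [if_neg hk, mul_zero]
  · simp

theorem antisym3_eq :
    antisym3 n = 1 - permFactors n (swap 0 1) - permFactors n (swap 0 2) -
      permFactors n (swap 1 2) + permFactors n (swap 0 2 * swap 0 1) +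
      permFactors n (swap 1 2 * swap 0 1) := by
  have sign_swap (a b : Fin 3) (h : a ≠ b) : Perm.sign (swap a b) = -1 := Perm.sign_swap h
  rw [antisym3, Perm.sum_fin_three]
  simp only [Perm.sign_mul, Perm.sign_one, sign_swap 0 1 (by decide), sign_swap 0 2 (by decide),
    sign_swap 1 2 (by decide), permFactors_one]
  push_cast
  module

end permFactors

/-- For `R_rat(u) = Id − (ħ/u)·P`, the fused product
`R_{23}(ħ)·R_{13}(2ħ)·R_{12}(ħ)` (i.e. `R_rat` evaluated at the differences of the points
`z, z−ħ, z−2ħ`) equals the antisymmetrizer `A₃`; explicitly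
`(Id − P₂₃)(Id − ½P₁₃)(Id − P₁₂) = A₃`. Here the tensor factors are indexed `0,1,2`. -/
theorem stmt3 (n : ℕ) :
    (1 - permFactors n (Equiv.swap 1 2)) *
      (1 - (2 : ℂ)⁻¹ • permFactors n (Equiv.swap 0 2)) *
      (1 - permFactors n (Equiv.swap 0 1)) = antisym3 n := by
  have swap_mul_swap : swap 1 2 * swap 0 2 = (swap 0 2 * swap 0 1 : Perm (Fin 3)) := by decide
  have swap_mul_self : swap 0 2 * swap 0 1 * swap 0 1 = (swap 0 2 : Perm (Fin 3)) := by decide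
  rw [antisym3_eq]
  simp only [mul_sub, sub_mul, one_mul, mul_one, Matrix.mul_smul, Matrix.smul_mul,
    permFactors_mul, swap_mul_swap, swap_mul_self]
  module
end

section
/- The trigonometric R-matrix satisfies the crossing-unitarity relation R_trig(z,w) · P · R_trig(w,z) · P = (vz − v^{−1}w)(vw − v^{−1}z) · Id in End(ℂ^n ⊗ ℂ^n); equivalently, R_trig(z,w) = (vz − v^{−1}w)(vw − v^{−1}z) · P R_trig(w,z)^{−1} P^{−1} when the right-hand scalar is invertible. -/
/-!
Right multiplication by `P` swaps the two tensor factors of the column index, and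
`R_trig(z,w) · P` preserves every plane spanned by `e_a ⊗ e_b` and `e_b ⊗ e_a`: it acts on
`e_a ⊗ e_a` by `vz − v⁻¹w`, and for `a < b` by the symmetric block
`[[(v − v⁻¹)z, z − w], [z − w, (v − v⁻¹)w]]`. The product with the corresponding block of
`R_trig(w,z) · P` is `(v − v⁻¹)²zw − (z − w)²` times the identity, and
`(v − v⁻¹)²zw − (z − w)² = (vz − v⁻¹w)(vw − v⁻¹z)` because `v v⁻¹ = 1`.
-/

open Matrix
open scoped Kronecker

/-- The trigonometric R-matrix
`R_trig(z,w) = (vz − v⁻¹w) Σ_i E_ii⊗E_ii + (z − w) Σ_{i≠j} E_ii⊗E_jj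
  + (v − v⁻¹) z Σ_{i<j} E_ij⊗E_ji + (v − v⁻¹) w Σ_{i>j} E_ij⊗E_ji`. -/
def Rtrig (n : ℕ) {R : Type*} [CommRing R] (v : Rˣ) (z w : R) :
    Matrix (Fin n × Fin n) (Fin n × Fin n) R :=
  ((v : R) * z - ((v⁻¹ : Rˣ) : R) * w) • ∑ i : Fin n,
      (Matrix.single i i (1 : R)) ⊗ₖ (Matrix.single i i (1 : R))
  + (z - w) • ∑ i : Fin n, ∑ j : Fin n,
      (if i ≠ j then (Matrix.single i i (1 : R)) ⊗ₖ (Matrix.single j j (1 : R))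
        else 0)
  + (((v : R) - ((v⁻¹ : Rˣ) : R)) * z) • ∑ i : Fin n, ∑ j : Fin n,
      (if i < j then (Matrix.single i j (1 : R)) ⊗ₖ (Matrix.single j i (1 : R))
        else 0)
  + (((v : R) - ((v⁻¹ : Rˣ) : R)) * w) • ∑ i : Fin n, ∑ j : Fin n,
      (if j < i then (Matrix.single i j (1 : R)) ⊗ₖ (Matrix.single j i (1 : R))
        else 0)


/-- The permutation operator `P = Σ_{i,j} E_ij ⊗ E_ji`. -/
def permOp (n : ℕ) (R : Type*) [CommRing R] :
    Matrix (Fin n × Fin n) (Fin n × Fin n) R :=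
  ∑ i : Fin n, ∑ j : Fin n,
    (Matrix.single i j (1 : R)) ⊗ₖ (Matrix.single j i (1 : R))

section Pieces

variable {ι R : Type*} [Fintype ι] [Semiring R]

lemma sum_single_kronecker_single_apply [DecidableEq ι] (p q : ι × ι) :
    (∑ i : ι, single i i (1 : R) ⊗ₖ single i i (1 : R)) p q =
      if q = p ∧ p.1 = p.2 then 1 else 0 := by
  rw [Matrix.sum_apply, Fintype.sum_eq_single p.1] <;>
    simp only [single_kronecker_single, single_apply] <;> grind

lemma sum_sum_ne_single_kronecker_single_apply [DecidableEq ι] (p q : ι × ι) :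
    (∑ i : ι, ∑ j : ι,
      if i ≠ j then single i i (1 : R) ⊗ₖ single j j (1 : R) else 0) p q =
      if q = p ∧ p.1 ≠ p.2 then 1 else 0 := by
  simp only [Matrix.sum_apply, ← Fintype.sum_prod_type']
  rw [Fintype.sum_eq_single p] <;>
    simp only [single_kronecker_single, Matrix.ite_apply, Matrix.zero_apply, single_apply] <;> grind

lemma sum_sum_lt_single_kronecker_single_apply [LinearOrder ι] (p q : ι × ι) :
    (∑ i : ι, ∑ j : ι,
      if i < j then single i j (1 : R) ⊗ₖ single j i (1 : R) else 0) p q =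
      if q = p.swap ∧ p.1 < p.2 then 1 else 0 := by
  simp only [Matrix.sum_apply, ← Fintype.sum_prod_type']
  rw [Fintype.sum_eq_single p] <;>
    simp only [single_kronecker_single, Matrix.ite_apply, Matrix.zero_apply, single_apply] <;> grind

lemma sum_sum_gt_single_kronecker_single_apply [LinearOrder ι] (p q : ι × ι) :
    (∑ i : ι, ∑ j : ι,
      if j < i then single i j (1 : R) ⊗ₖ single j i (1 : R) else 0) p q =
      if q = p.swap ∧ p.2 < p.1 then 1 else 0 := by
  simp only [Matrix.sum_apply, ← Fintype.sum_prod_type']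
  rw [Fintype.sum_eq_single p] <;>
    simp only [single_kronecker_single, Matrix.ite_apply, Matrix.zero_apply, single_apply] <;> grind

end Pieces

section Entries

variable {n : ℕ} {R : Type*} [CommRing R]

lemma permOp_apply (p q : Fin n × Fin n) : permOp n R p q = if p = q.swap then 1 else 0 := by
  simp only [permOp, Matrix.sum_apply, ← Fintype.sum_prod_type']
  rw [Fintype.sum_eq_single p] <;> simp only [single_kronecker_single, single_apply] <;> grind

lemma mul_permOp_apply (M : Matrix (Fin n × Fin n) (Fin n × Fin n) R) (p q : Fin n × Fin n) :
    (M * permOp n R) p q = M p q.swap := by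
  simp [mul_apply, permOp_apply]

lemma Rtrig_apply (v : Rˣ) (z w : R) (p q : Fin n × Fin n) :
    Rtrig n v z w p q =
      (if q = p ∧ p.1 = p.2 then (v : R) * z - ((v⁻¹ : Rˣ) : R) * w else 0)
      + (if q = p ∧ p.1 ≠ p.2 then z - w else 0)
      + (if q = p.swap ∧ p.1 < p.2 then ((v : R) - ((v⁻¹ : Rˣ) : R)) * z else 0)
      + (if q = p.swap ∧ p.2 < p.1 then ((v : R) - ((v⁻¹ : Rˣ) : R)) * w else 0) := by
  simp only [Rtrig, Matrix.add_apply, Matrix.smul_apply, sum_single_kronecker_single_apply,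
    sum_sum_ne_single_kronecker_single_apply, sum_sum_lt_single_kronecker_single_apply,
    sum_sum_gt_single_kronecker_single_apply, smul_eq_mul, mul_ite, mul_one, mul_zero]

end Entries

section SwapBlock

variable {ι R : Type*} [DecidableEq ι]

/-- `f p` is the diagonal entry in row `p`, `g p` the entry in row `p` and column `p.swap`
(ignored when `p.1 = p.2`). -/
def swapBlockMatrix [AddZeroClass R] (f g : ι × ι → R) : Matrix (ι × ι) (ι × ι) R :=
  of fun p q => (if q = p then f p else 0) + (if q = p.swap ∧ p.1 ≠ p.2 then g p else 0)

lemma swapBlockMatrix_eq_smul_one [NonAssocSemiring R] {f g : ι × ι → R} {c : R}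
    (hf : ∀ p, f p = c) (hg : ∀ p, p.1 ≠ p.2 → g p = 0) : swapBlockMatrix f g = c • 1 := by
  ext p q
  by_cases hp : p.1 = p.2
  · simp [swapBlockMatrix, one_apply, hf, hp, eq_comm]
  · simp [swapBlockMatrix, one_apply, hf, hg p hp, eq_comm]

lemma swapBlockMatrix_mul [Fintype ι] [NonUnitalNonAssocSemiring R] (f g f' g' : ι × ι → R) :
    swapBlockMatrix f g * swapBlockMatrix f' g' =
      swapBlockMatrix (fun p => f p * f' p + if p.1 ≠ p.2 then g p * g' p.swap else 0)
        (fun p => f p * g' p + g p * f' p.swap) := by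
  ext p q
  simp only [mul_apply, swapBlockMatrix, of_apply, add_mul, ite_mul, zero_mul,
    Finset.sum_add_distrib, ite_and, Finset.sum_ite_eq', Finset.mem_univ, if_true]
  by_cases hp : p.1 = p.2
  · have hswap : p.swap = p := Prod.ext hp.symm hp
    simp [hp, hswap]
  · have hne : p.swap ≠ p := fun h => hp (congrArg Prod.fst h).symm
    simp only [Prod.swap_swap, Prod.fst_swap, Prod.snd_swap, Ne.symm hp, hp, ne_eq,
      not_false_eq_true, if_true]
    split_ifs <;> simp_all

end SwapBlock

section Weight

variable {ι R : Type*} [LinearOrder ι] [CommRing R] (v : Rˣ) (z w : R)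

def rtrigWeight (p : ι × ι) : R :=
  if p.1 < p.2 then ((v : R) - ((v⁻¹ : Rˣ) : R)) * z
  else if p.2 < p.1 then ((v : R) - ((v⁻¹ : Rˣ) : R)) * w
  else (v : R) * z - ((v⁻¹ : Rˣ) : R) * w

variable {v z w}

lemma rtrigWeight_of_eq {p : ι × ι} (hp : p.1 = p.2) :
    rtrigWeight v z w p = (v : R) * z - ((v⁻¹ : Rˣ) : R) * w := by
  simp [rtrigWeight, hp]

lemma rtrigWeight_swap {p : ι × ι} (hp : p.1 ≠ p.2) :
    rtrigWeight v w z p.swap = rtrigWeight v z w p := by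
  rcases hp.lt_or_gt with h | h <;> simp [rtrigWeight, h, h.not_gt]

lemma rtrigWeight_mul_rtrigWeight {p : ι × ι} (hp : p.1 ≠ p.2) :
    rtrigWeight v z w p * rtrigWeight v w z p = ((v : R) - ((v⁻¹ : Rˣ) : R)) ^ 2 * z * w := by
  rcases hp.lt_or_gt with h | h <;>
    simp only [rtrigWeight, h, h.not_gt, if_true, if_false] <;> ring

end Weight

lemma Rtrig_mul_permOp {n : ℕ} {R : Type*} [CommRing R] (v : Rˣ) (z w : R) :
    Rtrig n v z w * permOp n R = swapBlockMatrix (rtrigWeight v z w) (fun _ => z - w) := by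
  ext ⟨a, b⟩ ⟨c, d⟩
  rw [mul_permOp_apply, Rtrig_apply]
  simp only [swapBlockMatrix, of_apply, rtrigWeight, Prod.swap_prod_mk, Prod.mk.injEq]
  grind

/-- Crossing-unitarity of the trigonometric R-matrix:
`R_trig(z,w) · P · R_trig(w,z) · P = (vz − v⁻¹w)(vw − v⁻¹z) · Id`;
equivalently (when the scalar is invertible)
`R_trig(z,w) = (vz − v⁻¹w)(vw − v⁻¹z) · P R_trig(w,z)⁻¹ P⁻¹`. -/
theorem stmt8 (n : ℕ) {R : Type*} [CommRing R] (v : Rˣ) (z w : R) :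
    Rtrig n v z w * permOp n R * Rtrig n v w z * permOp n R =
      (((v : R) * z - ((v⁻¹ : Rˣ) : R) * w) * ((v : R) * w - ((v⁻¹ : Rˣ) : R) * z)) •
        (1 : Matrix (Fin n × Fin n) (Fin n × Fin n) R) := by
  have hv : (v : R) * ((v⁻¹ : Rˣ) : R) = 1 := v.mul_inv
  rw [Matrix.mul_assoc (Rtrig n v z w * permOp n R), Rtrig_mul_permOp, Rtrig_mul_permOp,
    swapBlockMatrix_mul]
  apply swapBlockMatrix_eq_smul_one
  · intro p
    by_cases hp : p.1 = p.2
    · simp [hp, rtrigWeight_of_eq]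
    · rw [if_pos hp, rtrigWeight_mul_rtrigWeight hp]
      linear_combination (z - w) ^ 2 * hv
  · intro p hp
    rw [rtrigWeight_swap hp]
    ring
end

section
/- Let A be an associative unital algebra over a commutative ring, n ≥ 2, and let elements t^{(r)}_{ij} ∈ A (1 ≤ i,j ≤ n, r ≥ 1) satisfy the Yangian degree-one commutation relations: for all i,j,k,l and all r ≥ 1, [t^{(r)}_{ij}, t^{(1)}_{kl}] = δ_{kj} t^{(r)}_{il} − δ_{il} t^{(r)}_{kj}. Then the two-sided ideal I of A generated by the elements {t^{(r)}_{11} : r ≥ 2} contains t^{(r)}_{ij} for all 1 ≤ i,j ≤ n and all r ≥ 2. -/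
/-! Commuting with `t^{(1)}` moves indices: from `t^{(r)}_{11}`, the relation with
`t^{(1)}_{1l}` produces the first row `t^{(r)}_{1l}` modulo `t^{(r)}_{11}`, and the relation
of `t^{(r)}_{1j}` with `t^{(1)}_{i1}` then produces `t^{(r)}_{ij}` modulo `t^{(r)}_{11}`. -/

namespace TwoSidedIdeal

variable {A : Type*} [Ring A] (I : TwoSidedIdeal A)

theorem commutator_mem {a : A} (ha : a ∈ I) (b : A) : a * b - b * a ∈ I :=
  I.sub_mem (I.mul_mem_right _ _ ha) (I.mul_mem_left _ _ ha)

theorem ite_zero_mem {p : Prop} [Decidable p] {a : A} (ha : a ∈ I) :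
    (if p then a else 0) ∈ I := by
  split_ifs
  exacts [ha, I.zero_mem]

end TwoSidedIdeal

section DegreeOneRelations

variable {A ι : Type*} [Ring A] [DecidableEq ι] {T S : ι → ι → A} {I : TwoSidedIdeal A}

theorem row_mem_of_diag_mem (hrel : ∀ i j k l : ι,
    T i j * S k l - S k l * T i j = (if k = j then T i l else 0) - (if i = l then T k j else 0))
    {a : ι} (ha : T a a ∈ I) (l : ι) : T a l ∈ I := by
  have h := hrel a a a l
  rw [if_pos rfl] at h
  rw [sub_eq_iff_eq_add.mp h.symm]
  exact I.add_mem (I.commutator_mem ha _) (I.ite_zero_mem ha)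

theorem mem_of_diag_mem (hrel : ∀ i j k l : ι,
    T i j * S k l - S k l * T i j = (if k = j then T i l else 0) - (if i = l then T k j else 0))
    {a : ι} (ha : T a a ∈ I) (i j : ι) : T i j ∈ I := by
  have h := hrel a j i a
  rw [if_pos rfl] at h
  rw [← sub_sub_self (if i = j then T a a else 0) (T i j), ← h]
  exact I.sub_mem (I.ite_zero_mem ha) (I.commutator_mem (row_mem_of_diag_mem hrel ha j) _)

end DegreeOneRelations

/-- Let `A` be an associative unital algebra over a commutative ring, `n ≥ 2`, and let
`t^{(r)}_{ij} ∈ A` (indices in `Fin n`, `r ≥ 1`) satisfy the Yangian degree-one commutation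
relations `[t^{(r)}_{ij}, t^{(1)}_{kl}] = δ_{kj} t^{(r)}_{il} − δ_{il} t^{(r)}_{kj}`.
Then the two-sided ideal of `A` generated by `{t^{(r)}_{11} : r ≥ 2}` contains all
`t^{(r)}_{ij}` with `r ≥ 2`. -/
theorem stmt11 {A : Type*} [Ring A]
    (n : ℕ) (hn : 2 ≤ n) (t : ℕ → Fin n → Fin n → A)
    (hrel : ∀ r : ℕ, 1 ≤ r → ∀ i j k l : Fin n,
      t r i j * t 1 k l - t 1 k l * t r i j =
        (if k = j then t r i l else 0) - (if i = l then t r k j else 0)) :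
    ∀ r : ℕ, 2 ≤ r → ∀ i j : Fin n,
      t r i j ∈
        TwoSidedIdeal.span
          {x : A | ∃ s : ℕ, 2 ≤ s ∧ x = t s ⟨0, by omega⟩ ⟨0, by omega⟩} := by
  intro r hr
  exact mem_of_diag_mem (hrel r (by omega)) (TwoSidedIdeal.subset_span ⟨r, hr, rfl⟩)
end

section
/- Let A be a Hopf algebra over ℂ[ħ], and define its Drinfeld–Gavarini dual A' := { a ∈ A : δ_n(a) ∈ ħ^n A^{⊗n} for all n ≥ 1 }, where δ_n = (id − η∘ε)^{⊗n} ∘ Δ^n. Then A' is a ℂ[ħ]-subalgebra of A containing 1. -/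
/-!
Let `T = ħA + ℂ[ħ]·1`, a subalgebra of `A` with `(id − ηε)(T) ⊆ ħA`. Splitting the tensor factors
of `Δ^n(a)` one at a time along `id = (id − ηε) + ηε`, the counit axiom turns every `ηε` factor
into an inserted `1`, so `Δ^n(a)` is a sum of the `δ_Λ(a)` with units in the positions outside `Λ`;
for `a ∈ A'` this puts `Δ^n(a)` in `T^{⊗n}`. Since `Δ^n` is multiplicative and `T^{⊗n}` is closed
under the factorwise product, `Δ^n(ab) ∈ T^{⊗n}` for `a, b ∈ A'`, and applying `(id − ηε)^{⊗n}`
lands in `(ħA)^{⊗n} = ħ^n A^{⊗n}`.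
-/

open TensorProduct

variable (R : Type*) [CommRing R] (A : Type*) [Ring A] [Bialgebra R A]

/-- `TpowM R A n` is the `(n+1)`-fold tensor power `A ⊗ ⋯ ⊗ A` (so `TpowM R A 0 = A`),
bundled as an object of the category of `R`-modules. -/
noncomputable def TpowM : ℕ → ModuleCat R
  | 0 => ModuleCat.of R A
  | (n + 1) => ModuleCat.of R (A ⊗[R] (TpowM n))

/-- The iterated coproduct `Δ^{n+1} : A → A^{⊗(n+1)}`, defined by `Δ¹ = id` and
`Δ^{n+1} = (Δ ⊗ id^{⊗(n−1)}) ∘ Δ^n` (with the evident reassociation). -/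
noncomputable def iterComul : (n : ℕ) → (A →ₗ[R] TpowM R A n)
  | 0 => LinearMap.id
  | 1 => Coalgebra.comul
  | (n + 2) =>
      (TensorProduct.assoc R A A (TpowM R A n)).toLinearMap ∘ₗ
        (TensorProduct.map (Coalgebra.comul (R := R) (A := A)) LinearMap.id) ∘ₗ
          iterComul (n + 1)

/-- The projection `id − η∘ε : A → A`, `a ↦ a − ε(a)·1`. -/
noncomputable def projCounit : A →ₗ[R] A :=
  LinearMap.id - (Algebra.linearMap R A) ∘ₗ (Coalgebra.counit (R := R) (A := A))

/-- `(id − η∘ε)^{⊗(n+1)}` on the `(n+1)`-fold tensor power. -/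
noncomputable def projPow : (n : ℕ) → (TpowM R A n →ₗ[R] TpowM R A n)
  | 0 => projCounit R A
  | (n + 1) => TensorProduct.map (projCounit R A) (projPow n)

/-- `δ_{n+1} := (id − η∘ε)^{⊗(n+1)} ∘ Δ^{n+1} : A → A^{⊗(n+1)}`. -/
noncomputable def deltaMap (n : ℕ) : A →ₗ[R] TpowM R A n :=
  projPow R A n ∘ₗ iterComul R A n

/-- The Drinfeld–Gavarini dual of a Hopf algebra `A` over `ℂ[ħ]` (`ħ = X`):
`A' = { a ∈ A : δ_n(a) ∈ ħ^n A^{⊗n} for all n ≥ 1 }` (here `deltaMap _ A (n-1) = δ_n`). -/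
noncomputable def gavariniDual (A : Type*) [Ring A] [HopfAlgebra (Polynomial ℂ) A] :
    Set A :=
  {a : A | ∀ n : ℕ, ∃ y : TpowM (Polynomial ℂ) A n,
    deltaMap (Polynomial ℂ) A n a = (Polynomial.X : Polynomial ℂ) ^ (n + 1) • y}

noncomputable def unitCounit : A →ₗ[R] A :=
  Algebra.linearMap R A ∘ₗ Coalgebra.counit

/-- Inserts the factor `1` at position `k` (counted from `0`; at the end when `k > n`). -/
noncomputable def insertOne : (k n : ℕ) → (TpowM R A n →ₗ[R] TpowM R A (n + 1))
  | 0, n => TensorProduct.mk R A (TpowM R A n) 1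
  | _ + 1, 0 => (TensorProduct.mk R A A).flip 1
  | k + 1, n + 1 => TensorProduct.map LinearMap.id (insertOne k n)

/-- Applies `id − η∘ε` to the first `k` tensor factors. -/
noncomputable def projCounitPrefix : (k n : ℕ) → (TpowM R A n →ₗ[R] TpowM R A n)
  | 0, _ => LinearMap.id
  | _ + 1, 0 => projCounit R A
  | k + 1, n + 1 => TensorProduct.map (projCounit R A) (projCounitPrefix k n)

noncomputable def tpowMul : (n : ℕ) → (TpowM R A n →ₗ[R] TpowM R A n →ₗ[R] TpowM R A n)
  | 0 => LinearMap.mul R A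
  | n + 1 => TensorProduct.map₂ (LinearMap.mul R A) (tpowMul n)

/-- The span of the pure tensors whose first `k` factors lie in `S` and the others in `T`. -/
noncomputable def prefixSubmodule (S T : Submodule R A) :
    (k n : ℕ) → Submodule R (TpowM R A n)
  | 0, 0 => T
  | _ + 1, 0 => S
  | 0, n + 1 => Submodule.map₂ (TensorProduct.mk R A (TpowM R A n)) T (prefixSubmodule S T 0 n)
  | k + 1, n + 1 =>
      Submodule.map₂ (TensorProduct.mk R A (TpowM R A n)) S (prefixSubmodule S T k n)

open scoped Pointwise

variable {R A}

theorem TensorProduct.map_mem_map₂_mk {M N P Q : Type*} [AddCommMonoid M] [Module R M]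
    [AddCommMonoid N] [Module R N] [AddCommMonoid P] [Module R P] [AddCommMonoid Q] [Module R Q]
    {f : M →ₗ[R] P} {g : N →ₗ[R] Q} {p : Submodule R M} {q : Submodule R N}
    {p' : Submodule R P} {q' : Submodule R Q} (hf : ∀ m ∈ p, f m ∈ p') (hg : ∀ n ∈ q, g n ∈ q')
    {x : M ⊗[R] N} (hx : x ∈ Submodule.map₂ (mk R M N) p q) :
    map f g x ∈ Submodule.map₂ (mk R P Q) p' q' :=
  (Submodule.map₂_le (r := (Submodule.map₂ (mk R P Q) p' q').comap (map f g)) |>.2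
    (fun m hm n hn => Submodule.apply_mem_map₂ _ (hf m hm) (hg n hn))) hx

theorem TensorProduct.map₂_map₂_mk_le {M N P M' N' P' : Type*} [AddCommMonoid M] [Module R M]
    [AddCommMonoid N] [Module R N] [AddCommMonoid P] [Module R P] [AddCommMonoid M']
    [Module R M'] [AddCommMonoid N'] [Module R N'] [AddCommMonoid P'] [Module R P']
    {f : M →ₗ[R] N →ₗ[R] P} {g : M' →ₗ[R] N' →ₗ[R] P'} {p : Submodule R M} {q : Submodule R N}
    {r : Submodule R P} {p' : Submodule R M'} {q' : Submodule R N'} {r' : Submodule R P'}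
    (hf : Submodule.map₂ f p q ≤ r) (hg : Submodule.map₂ g p' q' ≤ r') :
    Submodule.map₂ (TensorProduct.map₂ f g) (Submodule.map₂ (mk R M M') p p')
      (Submodule.map₂ (mk R N N') q q') ≤ Submodule.map₂ (mk R P P') r r' := by
  rw [Submodule.map₂_eq_span_image2 (mk R M M'), Submodule.map₂_eq_span_image2 (mk R N N'),
    Submodule.map₂_span_span, Submodule.span_le]
  rintro _ ⟨_, ⟨m, hm, m', hm', rfl⟩, _, ⟨n, hn, n', hn', rfl⟩, rfl⟩
  exact Submodule.apply_mem_map₂ _ (hf (Submodule.apply_mem_map₂ _ hm hn))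
    (hg (Submodule.apply_mem_map₂ _ hm' hn'))

theorem TensorProduct.map₂_mk_smul_top {M N : Type*} [AddCommMonoid M] [Module R M]
    [AddCommMonoid N] [Module R N] (a b : R) :
    Submodule.map₂ (mk R M N) (a • ⊤) (b • ⊤) = (a * b) • ⊤ := by
  apply le_antisymm
  · rw [Submodule.map₂_le]
    intro _ hm _ hn
    obtain ⟨m, -, rfl⟩ := (Submodule.mem_smul_pointwise_iff_exists _ _ _).1 hm
    obtain ⟨n, -, rfl⟩ := (Submodule.mem_smul_pointwise_iff_exists _ _ _).1 hn
    rw [mk_apply, ← smul_tmul', tmul_smul, ← mul_smul]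
    exact Submodule.smul_mem_pointwise_smul _ _ _ trivial
  · intro _ hx
    obtain ⟨x, -, rfl⟩ := (Submodule.mem_smul_pointwise_iff_exists _ _ _).1 hx
    clear hx
    induction x using TensorProduct.induction_on with
    | zero => rw [smul_zero]; exact zero_mem _
    | tmul m n =>
      rw [mul_smul, ← tmul_smul, smul_tmul']
      exact Submodule.apply_mem_map₂ _ (Submodule.smul_mem_pointwise_smul _ _ _ trivial)
        (Submodule.smul_mem_pointwise_smul _ _ _ trivial)
    | add x y hx hy => rw [smul_add]; exact add_mem hx hy

-- `TpowM R A (n + 1)` is `A ⊗[R] TpowM R A n` only up to unfolding, hence the `show`s and the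
-- closing `rfl`s below.
theorem iterComul_succ_apply (n : ℕ) (a : A) :
    iterComul R A (n + 1) a = map LinearMap.id (iterComul R A n) (Coalgebra.comul a) := by
  induction n generalizing a with
  | zero => exact (DFunLike.congr_fun map_id _).symm
  | succ n ih =>
    have natural (x : A ⊗[R] A) :
        TensorProduct.assoc R A A _ (map Coalgebra.comul LinearMap.id
          (map LinearMap.id (iterComul R A n) x)) =
        map LinearMap.id (map LinearMap.id (iterComul R A n))
          (TensorProduct.assoc R A A A (Coalgebra.comul.rTensor A x)) := by
      rw [map_map_assoc, LinearMap.rTensor, map_map, map_map]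
      simp only [LinearMap.id_comp, LinearMap.comp_id, map_id]
    have tail (x : A ⊗[R] A) :
        map LinearMap.id (map LinearMap.id (iterComul R A n)) (Coalgebra.comul.lTensor A x) =
          map LinearMap.id (iterComul R A (n + 1)) x := by
      induction x using TensorProduct.induction_on with
      | zero => simp only [map_zero]; rfl
      | tmul b c => simp only [LinearMap.lTensor_tmul, map_tmul, LinearMap.id_apply, ih]; rfl
      | add x y hx hy => simp only [map_add, hx, hy]; rfl
    show TensorProduct.assoc R A A _ (map Coalgebra.comul LinearMap.id (iterComul R A (n + 1) a)) = _
    rw [ih, natural, Coalgebra.coassoc_apply, tail]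

theorem iterComul_mul (n : ℕ) (a b : A) :
    iterComul R A n (a * b) = tpowMul R A n (iterComul R A n a) (iterComul R A n b) := by
  induction n generalizing a b with
  | zero => rfl
  | succ n ih =>
    have hmul (x y : A ⊗[R] A) : map LinearMap.id (iterComul R A n) (x * y) =
        tpowMul R A (n + 1) (map LinearMap.id (iterComul R A n) x)
          (map LinearMap.id (iterComul R A n) y) := by
      induction x using TensorProduct.induction_on with
      | zero => simp only [zero_mul, map_zero]; rfl
      | add x x' hx hx' =>
        simp only [add_mul, map_add, hx, hx']
        exact (LinearMap.map_add₂ (tpowMul R A (n + 1)) _ _ _).symm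
      | tmul a b =>
        induction y using TensorProduct.induction_on with
        | zero => simp only [mul_zero, map_zero]; rfl
        | add y y' hy hy' =>
          simp only [mul_add, map_add, hy, hy']
          exact (map_add _ _ _).symm
        | tmul c d =>
          simp only [Algebra.TensorProduct.tmul_mul_tmul, map_tmul, LinearMap.id_apply, ih]; rfl
    rw [iterComul_succ_apply, iterComul_succ_apply, iterComul_succ_apply, Bialgebra.comul_mul, hmul]

theorem projCounit_algebraMap (r : R) : projCounit R A (algebraMap R A r) = 0 := by
  simp [projCounit]

theorem deltaMap_one (n : ℕ) : deltaMap R A n 1 = 0 := by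
  have hP : projCounit R A 1 = 0 := by rw [← map_one (algebraMap R A), projCounit_algebraMap]
  cases n with
  | zero => exact hP
  | succ n =>
    show projPow R A (n + 1) (iterComul R A (n + 1) 1) = 0
    rw [iterComul_succ_apply, Bialgebra.comul_one, Algebra.TensorProduct.one_def, map_tmul]
    show projCounit R A 1 ⊗ₜ[R] projPow R A n _ = 0
    rw [hP, zero_tmul]

theorem projCounit_add_unitCounit : projCounit R A + unitCounit R A = LinearMap.id :=
  sub_add_cancel _ _

theorem map_unitCounit_comul {M : Type*} [AddCommMonoid M] [Module R M] (f : A →ₗ[R] M)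
    (a : A) : map (unitCounit R A) f (Coalgebra.comul a) = (1 : A) ⊗ₜ f a := by
  rw [unitCounit, ← LinearMap.comp_id f, map_comp, LinearMap.comp_apply, ← LinearMap.rTensor_def,
    Coalgebra.rTensor_counit_comul, map_tmul, Algebra.linearMap_apply, map_one]
  rfl

theorem map_comul_unitCounit {M : Type*} [AddCommMonoid M] [Module R M] (f : A →ₗ[R] M)
    (a : A) : map f (unitCounit R A) (Coalgebra.comul a) = f a ⊗ₜ (1 : A) := by
  rw [unitCounit, ← LinearMap.comp_id f, map_comp, LinearMap.comp_apply, ← LinearMap.lTensor_def,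
    Coalgebra.lTensor_counit_comul, map_tmul, Algebra.linearMap_apply, map_one]
  rfl

theorem projCounitPrefix_self (n : ℕ) : projCounitPrefix R A (n + 1) n = projPow R A n := by
  induction n with
  | zero => rfl
  | succ n ih => exact congrArg (map (projCounit R A)) ih

theorem projCounitPrefix_succ_iterComul_succ (k n : ℕ) (a : A) :
    projCounitPrefix R A (k + 1) (n + 1) (iterComul R A (n + 1) a) =
      map (projCounit R A) (projCounitPrefix R A k n ∘ₗ iterComul R A n) (Coalgebra.comul a) := by
  show map _ _ _ = _
  rw [iterComul_succ_apply, map_map, LinearMap.comp_id]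

/-- Split the `(k+1)`-st factor along `id = (id − ηε) + ηε`; by the counit axiom the `ηε` part is
`Δ^{n+1}` with a `1` inserted there. -/
theorem projCounitPrefix_comp_iterComul_succ (k n : ℕ) (hk : k ≤ n + 1) :
    projCounitPrefix R A k (n + 1) ∘ₗ iterComul R A (n + 1) =
      projCounitPrefix R A (k + 1) (n + 1) ∘ₗ iterComul R A (n + 1) +
        insertOne R A k n ∘ₗ projCounitPrefix R A k n ∘ₗ iterComul R A n := by
  induction k generalizing n with
  | zero =>
    ext a
    show iterComul R A (n + 1) a =
      map (projCounit R A) LinearMap.id (iterComul R A (n + 1) a) + (1 : A) ⊗ₜ[R] iterComul R A n a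
    rw [iterComul_succ_apply, map_map, LinearMap.id_comp, LinearMap.comp_id,
      ← map_unitCounit_comul, ← LinearMap.add_apply, ← map_add_left, projCounit_add_unitCounit]
  | succ k ih =>
    ext a
    cases n with
    | zero =>
      obtain rfl : k = 0 := by omega
      show map (projCounit R A) LinearMap.id (Coalgebra.comul a) =
        map (projCounit R A) (projCounit R A) (Coalgebra.comul a) + projCounit R A a ⊗ₜ[R] (1 : A)
      rw [← map_comul_unitCounit, ← LinearMap.add_apply, ← map_add_right, projCounit_add_unitCounit]
    | succ m =>
      simp only [LinearMap.add_apply, LinearMap.comp_apply]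
      rw [projCounitPrefix_succ_iterComul_succ, projCounitPrefix_succ_iterComul_succ,
        projCounitPrefix_succ_iterComul_succ, ih m (by omega), map_add_right, LinearMap.add_apply]
      show _ = _ + (insertOne R A k m).lTensor A _
      rw [LinearMap.lTensor_map]

section prefixSubmodule

variable {S T : Submodule R A}

theorem prefixSubmodule_succ_le (hST : S ≤ T) (k n : ℕ) :
    prefixSubmodule R A S T (k + 1) n ≤ prefixSubmodule R A S T k n := by
  induction n generalizing k with
  | zero => cases k with
    | zero => exact hST
    | succ k => exact le_rfl
  | succ n ih => cases k with
    | zero => exact Submodule.map₂_le_map₂ hST le_rfl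
    | succ k => exact Submodule.map₂_le_map₂ le_rfl (ih k)

theorem insertOne_mem_prefixSubmodule (hT : (1 : A) ∈ T) {k n : ℕ} (hk : k ≤ n + 1)
    {x : TpowM R A n} (hx : x ∈ prefixSubmodule R A S T k n) :
    insertOne R A k n x ∈ prefixSubmodule R A S T k (n + 1) := by
  induction k generalizing n with
  | zero => exact Submodule.apply_mem_map₂ _ hT hx
  | succ k ih => cases n with
    | zero =>
      obtain rfl : k = 0 := by omega
      exact Submodule.apply_mem_map₂ (mk R A A) hx hT
    | succ m => exact map_mem_map₂_mk (fun _ h => h) (fun _ h => ih (by omega) h) hx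

theorem projPow_mem_prefixSubmodule (hTS : ∀ t ∈ T, projCounit R A t ∈ S) {n : ℕ}
    {x : TpowM R A n} (hx : x ∈ prefixSubmodule R A S T 0 n) :
    projPow R A n x ∈ prefixSubmodule R A S T (n + 1) n := by
  induction n with
  | zero => exact hTS x hx
  | succ n ih => exact map_mem_map₂_mk hTS (fun _ h => ih h) hx

theorem map₂_tpowMul_prefixSubmodule_le (hT : T * T ≤ T) (n : ℕ) :
    Submodule.map₂ (tpowMul R A n) (prefixSubmodule R A S T 0 n) (prefixSubmodule R A S T 0 n) ≤
      prefixSubmodule R A S T 0 n := by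
  rw [Submodule.mul_eq_map₂] at hT
  induction n with
  | zero => exact hT
  | succ n ih => exact map₂_map₂_mk_le hT ih

theorem prefixSubmodule_smul_top (h : R) (T : Submodule R A) (n : ℕ) :
    prefixSubmodule R A (h • ⊤) T (n + 1) n = h ^ (n + 1) • (⊤ : Submodule R (TpowM R A n)) := by
  induction n with
  | zero => rw [zero_add, pow_one]; rfl
  | succ n ih =>
    show Submodule.map₂ (mk R A (TpowM R A n)) (h • ⊤) (prefixSubmodule R A (h • ⊤) T (n + 1) n) = _
    rw [ih, map₂_mk_smul_top, ← pow_succ']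
    rfl

theorem iterComul_mem_prefixSubmodule (hST : S ≤ T) (hT : (1 : A) ∈ T) {a : A}
    (ha : ∀ n, projPow R A n (iterComul R A n a) ∈ prefixSubmodule R A S T (n + 1) n) (n : ℕ) :
    iterComul R A n a ∈ prefixSubmodule R A S T 0 n := by
  -- descending induction on the number `k` of projected factors, with `j = n + 1 - k`
  suffices ∀ j n k, k + j = n + 1 →
      projCounitPrefix R A k n (iterComul R A n a) ∈ prefixSubmodule R A S T k n from
    this (n + 1) n 0 (by omega)
  intro j
  induction j with
  | zero =>
    intro n k hk
    obtain rfl : k = n + 1 := by omega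
    rw [projCounitPrefix_self]
    exact ha n
  | succ j ih =>
    rintro (_ | m) k hk
    · obtain rfl : k = 0 := by omega
      have hsplit : projCounit R A a + Coalgebra.counit (R := R) a • 1 = a := by
        simp [projCounit, Algebra.algebraMap_eq_smul_one]
      rw [← hsplit]
      exact T.add_mem (hST (ha 0)) (T.smul_mem _ hT)
    · rw [← LinearMap.comp_apply, projCounitPrefix_comp_iterComul_succ k m (by omega)]
      exact add_mem (prefixSubmodule_succ_le hST k (m + 1) (ih (m + 1) (k + 1) (by omega)))
        (insertOne_mem_prefixSubmodule hT (by omega) (ih m k (by omega)))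

end prefixSubmodule

section DrinfeldGavariniDual

variable (A) in
noncomputable def drinfeldGavariniDual (h : R) : Submodule R A :=
  ⨅ n, (h ^ (n + 1) • ⊤ : Submodule R (TpowM R A n)).comap (deltaMap R A n)

theorem mem_drinfeldGavariniDual {h : R} {a : A} :
    a ∈ drinfeldGavariniDual A h ↔
      ∀ n, deltaMap R A n a ∈ h ^ (n + 1) • (⊤ : Submodule R (TpowM R A n)) := by
  simp only [drinfeldGavariniDual, Submodule.mem_iInf, Submodule.mem_comap]

theorem smul_top_sup_one_mul_le (h : R) :
    (h • ⊤ ⊔ 1 : Submodule R A) * (h • ⊤ ⊔ 1) ≤ h • ⊤ ⊔ 1 := by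
  have hideal : (h • ⊤ : Submodule R A) * (h • ⊤ ⊔ 1) ≤ h • ⊤ := by
    refine Submodule.mul_le.2 fun x hx y _ => ?_
    obtain ⟨b, -, rfl⟩ := (Submodule.mem_smul_pointwise_iff_exists _ _ _).1 hx
    rw [smul_mul_assoc]
    exact Submodule.smul_mem_pointwise_smul _ _ _ trivial
  rw [Submodule.sup_mul, one_mul]
  exact sup_le (hideal.trans le_sup_left) le_rfl

theorem projCounit_mem_smul_top (h : R) (x : A) (hx : x ∈ (h • ⊤ ⊔ 1 : Submodule R A)) :
    projCounit R A x ∈ h • (⊤ : Submodule R A) := by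
  obtain ⟨s, hs, u, hu, rfl⟩ := Submodule.mem_sup.1 hx
  obtain ⟨b, -, rfl⟩ := (Submodule.mem_smul_pointwise_iff_exists _ _ _).1 hs
  obtain ⟨r, rfl⟩ := Submodule.mem_one.1 hu
  rw [map_add, map_smul, projCounit_algebraMap, add_zero]
  exact Submodule.smul_mem_pointwise_smul _ _ _ trivial

theorem iterComul_mem_of_mem_drinfeldGavariniDual {h : R} {a : A}
    (ha : a ∈ drinfeldGavariniDual A h) (n : ℕ) :
    iterComul R A n a ∈ prefixSubmodule R A (h • ⊤) (h • ⊤ ⊔ 1) 0 n :=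
  iterComul_mem_prefixSubmodule le_sup_left (Submodule.one_le.1 le_sup_right)
    (fun m => by rw [prefixSubmodule_smul_top]; exact mem_drinfeldGavariniDual.1 ha m) n

theorem mul_mem_drinfeldGavariniDual {h : R} {a b : A} (ha : a ∈ drinfeldGavariniDual A h)
    (hb : b ∈ drinfeldGavariniDual A h) : a * b ∈ drinfeldGavariniDual A h := by
  refine mem_drinfeldGavariniDual.2 fun n => ?_
  have hprod := map₂_tpowMul_prefixSubmodule_le (smul_top_sup_one_mul_le h) n
    (Submodule.apply_mem_map₂ _ (iterComul_mem_of_mem_drinfeldGavariniDual ha n)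
      (iterComul_mem_of_mem_drinfeldGavariniDual hb n))
  rw [← prefixSubmodule_smul_top h (h • ⊤ ⊔ 1)]
  show projPow R A n (iterComul R A n (a * b)) ∈ _
  rw [iterComul_mul]
  exact projPow_mem_prefixSubmodule (projCounit_mem_smul_top h) hprod

theorem one_mem_drinfeldGavariniDual (h : R) : (1 : A) ∈ drinfeldGavariniDual A h :=
  mem_drinfeldGavariniDual.2 fun n => by rw [deltaMap_one]; exact zero_mem _

variable (A) in
noncomputable def drinfeldGavariniDualSubalgebra (h : R) : Subalgebra R A :=
  (drinfeldGavariniDual A h).toSubalgebra (one_mem_drinfeldGavariniDual h)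
    fun _ _ => mul_mem_drinfeldGavariniDual

theorem coe_drinfeldGavariniDualSubalgebra_X (A : Type*) [Ring A]
    [HopfAlgebra (Polynomial ℂ) A] :
    (drinfeldGavariniDualSubalgebra A (Polynomial.X : Polynomial ℂ) : Set A) = gavariniDual A := by
  ext a
  refine mem_drinfeldGavariniDual.trans (forall_congr' fun n => ?_)
  simp only [Submodule.mem_smul_pointwise_iff_exists, Submodule.mem_top, true_and, eq_comm]

end DrinfeldGavariniDual

/-- The Drinfeld–Gavarini dual `A'` of a Hopf algebra `A` over `ℂ[ħ]` is a
`ℂ[ħ]`-subalgebra of `A` containing `1`. -/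
theorem stmt15 (A : Type*) [Ring A] [HopfAlgebra (Polynomial ℂ) A] :
    (1 : A) ∈ gavariniDual A ∧
    (∀ a ∈ gavariniDual A, ∀ b ∈ gavariniDual A, a * b ∈ gavariniDual A) ∧
    (∀ a ∈ gavariniDual A, ∀ b ∈ gavariniDual A, a + b ∈ gavariniDual A) ∧
    (∀ c : Polynomial ℂ, ∀ a ∈ gavariniDual A, c • a ∈ gavariniDual A) := by
  rw [← coe_drinfeldGavariniDualSubalgebra_X]
  exact ⟨one_mem _, fun _ ha _ hb => mul_mem ha hb, fun _ ha _ hb => add_mem ha hb,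
    fun c _ ha => Subalgebra.smul_mem _ ha c⟩
end

section
/- Let A be a Hopf algebra over ℂ[ħ] and A' its Drinfeld–Gavarini dual, A' = { a ∈ A : δ_n(a) ∈ ħ^n A^{⊗n} for all n ≥ 1 }. Then for any a, b ∈ A', the commutator [a,b] = ab − ba lies in ħ·A'. -/
/-!
Write `π = id − η∘ε`. For `a, b ∈ A'` we have `π a = ħ y₁` and `π b = ħ y₂`, and
`ab − ba = π a π b − π b π a = ħ² [y₁, y₂]`, so it suffices that `ħ [y₁, y₂] ∈ A'`.

Splitting `id = π + η∘ε` in every tensor factor expands `δ_n(uv)` as the sum, over pairs of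
masks `s, t ⊆ {1, …, n}` with `s ∪ t` everything, of `Δ_s(u) Δ_t(v)`, where `Δ_s` applies `π` in
the slots of `s` and `η∘ε` in the others. If `s` and `t` are disjoint, the factors commute slot by
slot (one of them is a scalar), so these terms cancel in `δ_n([y₁, y₂])`. Otherwise
`|s| + |t| ≥ n + 1`. Deleting the `η∘ε` slots (which only insert `1`s) shows that
`ħ Δ_s(y₁) = Δ_s(a)` is divisible by `ħ^|s|`, hence `ħ Δ_s(y₁) Δ_t(y₂)` by `ħ^(|s|+|t|-1)`,
a power at least `ħ^n`.
-/

open TensorProduct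

variable (R : Type*) [CommRing R] (A : Type*) [Ring A] [Bialgebra R A]

theorem Fintype.sum_fin_succ_pi {α M : Type*} [Fintype α] [AddCommMonoid M] {n : ℕ}
    (f : (Fin (n + 1) → α) → M) : ∑ s, f s = ∑ a, ∑ s, f (Fin.cons a s) := by
  rw [← (Fin.consEquiv fun _ => α).sum_comp, Fintype.sum_prod_type]
  rfl

theorem Fin.removeNth_succ_eq_cons {α : Type*} {n : ℕ} (q : Fin (n + 1))
    (s : Fin (n + 2) → α) : (q.succ).removeNth s = Fin.cons (s 0) (q.removeNth (Fin.tail s)) := by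
  ext i
  cases i using Fin.cases with
  | zero => simp [Fin.removeNth_apply]
  | succ j => simp [Fin.removeNth_apply, Fin.tail, Fin.succ_succAbove_succ]

open LinearMap in
theorem iterComul_succ : ∀ n : ℕ, iterComul R A (n + 1) =
    lTensor A (iterComul R A n) ∘ₗ Coalgebra.comul (R := R)
  | 0 => by
      change Coalgebra.comul = lTensor A LinearMap.id ∘ₗ Coalgebra.comul
      rw [lTensor_id, id_comp]
  | n + 1 => by
      change (TensorProduct.assoc R A A (TpowM R A n)).toLinearMap ∘ₗ
        rTensor _ Coalgebra.comul ∘ₗ iterComul R A (n + 1) = _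
      rw [iterComul_succ n]
      calc _ = (TensorProduct.assoc R A A (TpowM R A n)).toLinearMap ∘ₗ
              lTensor (A ⊗[R] A) (iterComul R A n) ∘ₗ
                (rTensor A Coalgebra.comul ∘ₗ Coalgebra.comul (R := R)) := by
            simp only [← comp_assoc, rTensor_comp_lTensor, lTensor_comp_rTensor]
        _ = lTensor A (lTensor A (iterComul R A n)) ∘ₗ
              ((TensorProduct.assoc R A A A).toLinearMap ∘ₗ
                rTensor A Coalgebra.comul ∘ₗ Coalgebra.comul (R := R)) := by
            rw [lTensor_tensor]
            ext x
            simp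
        _ = _ := by
            rw [Coalgebra.coassoc, ← comp_assoc, ← lTensor_comp]
            rfl

theorem deltaMap_succ (n : ℕ) : deltaMap R A (n + 1) =
    TensorProduct.map (projCounit R A) (deltaMap R A n) ∘ₗ Coalgebra.comul (R := R) := by
  change TensorProduct.map (projCounit R A) (projPow R A n) ∘ₗ iterComul R A (n + 1) = _
  rw [iterComul_succ, ← LinearMap.comp_assoc, LinearMap.map_comp_lTensor]
  rfl

noncomputable def maskProj : Bool → (A →ₗ[R] A)
  | false => Algebra.linearMap R A ∘ₗ Coalgebra.counit
  | true => projCounit R A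

theorem projCounit_apply (u : A) :
    projCounit R A u = u - Coalgebra.counit (R := R) u • 1 := by
  simp [projCounit, Algebra.algebraMap_eq_smul_one]

/-- `maskDelta R A n s = (f₀ ⊗ ⋯ ⊗ fₙ) ∘ Δ^{n+1}` with `fᵢ = maskProj R A (s i)`. -/
noncomputable def maskDelta : (n : ℕ) → (Fin (n + 1) → Bool) → (A →ₗ[R] TpowM R A n)
  | 0, s => maskProj R A (s 0)
  | n + 1, s =>
      TensorProduct.map (maskProj R A (s 0)) (maskDelta n (Fin.tail s)) ∘ₗ Coalgebra.comul

theorem maskDelta_cons (n : ℕ) (b : Bool) (s : Fin (n + 1) → Bool) :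
    maskDelta R A (n + 1) (Fin.cons b s) =
      TensorProduct.map (maskProj R A b) (maskDelta R A n s) ∘ₗ Coalgebra.comul := by
  rw [maskDelta, Fin.cons_zero, Fin.tail_cons]
  rfl

theorem maskDelta_true : ∀ n : ℕ, maskDelta R A n (fun _ => true) = deltaMap R A n
  | 0 => rfl
  | n + 1 => by
    rw [deltaMap_succ, ← maskDelta_true n]
    rfl

theorem projCounit_mul (u v : A) :
    projCounit R A (u * v) = ∑ b : Bool, ∑ c : Bool,
      if (b = true ∨ c = true) then maskProj R A b u * maskProj R A c v else 0 := by
  simp only [Fintype.sum_bool, maskProj, projCounit, LinearMap.sub_apply, LinearMap.id_apply,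
    LinearMap.comp_apply, Algebra.linearMap_apply, Bialgebra.counit_mul, map_mul,
    ↓reduceIte, Bool.false_eq_true, or_false, or_true, add_zero]
  noncomm_ring

theorem map_projCounit_deltaMap_mul (n : ℕ)
    (ih : ∀ u v : A, deltaMap R A n (u * v) = ∑ s, ∑ t,
      if (∀ i, s i = true ∨ t i = true) then
        tpowMul R A n (maskDelta R A n s u) (maskDelta R A n t v) else 0)
    (z w : A ⊗[R] A) :
    TensorProduct.map (projCounit R A) (deltaMap R A n) (z * w) =
      ∑ b, ∑ c, ∑ s, ∑ t, if (∀ i, s i = true ∨ t i = true) ∧ (b = true ∨ c = true) then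
        TensorProduct.map₂ (LinearMap.mul R A) (tpowMul R A n)
          (TensorProduct.map (maskProj R A b) (maskDelta R A n s) z)
          (TensorProduct.map (maskProj R A c) (maskDelta R A n t) w) else 0 := by
  induction z using TensorProduct.induction_on with
  | zero => simp
  | add z₁ z₂ h₁ h₂ =>
    simp only [add_mul, map_add, h₁, h₂, LinearMap.add_apply, ite_add_zero,
      Finset.sum_add_distrib]
  | tmul z₁ z₂ =>
    induction w using TensorProduct.induction_on with
    | zero => simp
    | add w₁ w₂ h₁ h₂ =>
      simp only [mul_add, map_add, h₁, h₂, ite_add_zero, Finset.sum_add_distrib]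
    | tmul w₁ w₂ =>
      simp only [Algebra.TensorProduct.tmul_mul_tmul, TensorProduct.map_tmul, projCounit_mul, ih,
        TensorProduct.map₂_apply_tmul, LinearMap.mul_apply']
      simp only [TensorProduct.sum_tmul]
      simp only [TensorProduct.tmul_sum, TensorProduct.ite_tmul, TensorProduct.tmul_ite, ite_and]

theorem deltaMap_mul : ∀ (n : ℕ) (u v : A), deltaMap R A n (u * v) = ∑ s, ∑ t,
    if (∀ i, s i = true ∨ t i = true) then
      tpowMul R A n (maskDelta R A n s u) (maskDelta R A n t v) else 0
  | 0, u, v => by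
    simp only [Fintype.sum_fin_succ_pi (n := 0), Fintype.sum_unique]
    exact projCounit_mul R A u v
  | n + 1, u, v => by
    refine Eq.trans ?_ ((map_projCounit_deltaMap_mul R A n (deltaMap_mul n) (Coalgebra.comul u)
      (Coalgebra.comul v)).trans ?_)
    · rw [deltaMap_succ, ← Bialgebra.comul_mul]
      rfl
    simp only [Fintype.sum_fin_succ_pi (n := n + 1), maskDelta_cons, Fin.forall_fin_succ,
      Fin.cons_zero, Fin.cons_succ]
    refine Finset.sum_congr rfl fun b _ => ?_
    rw [Finset.sum_comm]
    simp only [and_comm]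
    rfl

theorem maskDelta_cons_false (n : ℕ) (s : Fin (n + 1) → Bool) :
    maskDelta R A (n + 1) (Fin.cons false s) =
      TensorProduct.mk R A (TpowM R A n) 1 ∘ₗ maskDelta R A n s := by
  rw [maskDelta_cons]
  ext u
  have h := congrArg (TensorProduct.map (Algebra.linearMap R A) (maskDelta R A n s))
    (Coalgebra.rTensor_counit_comul (R := R) u)
  rw [← LinearMap.comp_apply (TensorProduct.map _ _), LinearMap.map_comp_rTensor] at h
  simpa [maskProj] using h

theorem maskDelta_pair_false (b : Bool) :
    maskDelta R A 1 ![b, false] = (TensorProduct.mk R A A).flip 1 ∘ₗ maskProj R A b := by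
  ext u
  have h := congrArg (TensorProduct.map (maskProj R A b) (Algebra.linearMap R A))
    (Coalgebra.lTensor_counit_comul (R := R) u)
  rw [← LinearMap.comp_apply (TensorProduct.map _ _), LinearMap.map_comp_lTensor] at h
  simp only [TensorProduct.map_tmul, Algebra.linearMap_apply, map_one] at h
  exact h

theorem maskDelta_eq_comp_removeNth : ∀ (n : ℕ) (p : Fin (n + 2)) (s : Fin (n + 2) → Bool),
    s p = false → ∃ L : TpowM R A n →ₗ[R] TpowM R A (n + 1),
      maskDelta R A (n + 1) s = L ∘ₗ maskDelta R A n (p.removeNth s)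
  | n, 0, s, hs => by
    refine ⟨TensorProduct.mk R A (TpowM R A n) 1, ?_⟩
    rw [← Fin.cons_self_tail s, hs, maskDelta_cons_false, Fin.removeNth_zero, Fin.tail_cons]
    rfl
  | 0, ⟨1, _⟩, s, hs => by
    refine ⟨(TensorProduct.mk R A A).flip 1, ?_⟩
    have hs' : s = ![s 0, false] := by
      ext i; fin_cases i <;> simp [← hs]
    rw [hs', maskDelta_pair_false]
    rfl
  | n + 1, ⟨q + 1, hq⟩, s, hs => by
    obtain ⟨L, hL⟩ := maskDelta_eq_comp_removeNth n ⟨q, by omega⟩ (Fin.tail s) hs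
    refine ⟨LinearMap.lTensor A L, ?_⟩
    have hq' : (⟨q + 1, hq⟩ : Fin (n + 3)) = Fin.succ ⟨q, by omega⟩ := rfl
    rw [hq', Fin.removeNth_succ_eq_cons, maskDelta_cons, ← Fin.cons_self_tail s, maskDelta_cons,
      Fin.tail_cons, Fin.cons_zero, hL]
    ext u
    exact (LinearMap.lTensor_map _ _ _ _ _).symm
  | 0, ⟨q + 2, hq⟩, _, _ => absurd hq (by omega)

def gavariniDualAt (r : R) : Set A :=
  {a | ∀ n, ∃ y : TpowM R A n, deltaMap R A n a = r ^ (n + 1) • y}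

theorem exists_maskDelta_eq_pow_smul {r : R} {a : A} (ha : a ∈ gavariniDualAt R A r) :
    ∀ (n : ℕ) (s : Fin (n + 1) → Bool),
      ∃ w : TpowM R A n, maskDelta R A n s a = r ^ (∑ i, (s i).toNat) • w
  | n, s => by
    by_cases hs : ∀ i, s i = true
    · obtain rfl : s = fun _ => true := funext hs
      simpa [maskDelta_true] using ha n
    obtain ⟨p, hp⟩ : ∃ p, s p = false := by simpa using hs
    cases n with
    | zero => exact ⟨maskDelta R A 0 s a, by simp [Fin.eq_zero p ▸ hp]⟩
    | succ n =>
      obtain ⟨L, hL⟩ := maskDelta_eq_comp_removeNth R A n p s hp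
      obtain ⟨w, hw⟩ := exists_maskDelta_eq_pow_smul ha n (p.removeNth s)
      refine ⟨L w, ?_⟩
      rw [hL, LinearMap.comp_apply, hw, map_smul, Fin.sum_univ_succAbove _ p, hp]
      simp [Fin.removeNth_apply]

theorem maskDelta_one : ∀ (n : ℕ) (s : Fin (n + 1) → Bool), (∃ i, s i = true) →
    maskDelta R A n s 1 = 0
  | 0, s, ⟨i, hi⟩ => by
    rw [Fin.eq_zero i] at hi
    change maskProj R A (s 0) 1 = 0
    simp [hi, maskProj, projCounit_apply]
  | n + 1, s, ⟨i, hi⟩ => by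
    change TensorProduct.map _ _ (Coalgebra.comul (1 : A)) = (0 : A ⊗[R] TpowM R A n)
    rw [Bialgebra.comul_one, Algebra.TensorProduct.one_def, TensorProduct.map_tmul]
    cases i using Fin.cases with
    | zero => simp [hi, maskProj, projCounit_apply]
    | succ j => rw [maskDelta_one n (Fin.tail s) ⟨j, hi⟩, TensorProduct.tmul_zero]

theorem maskDelta_projCounit {n : ℕ} {s : Fin (n + 1) → Bool} (hs : ∃ i, s i = true)
    (u : A) :
    maskDelta R A n s (projCounit R A u) = maskDelta R A n s u := by
  rw [projCounit_apply, map_sub, map_smul, maskDelta_one R A n s hs, smul_zero, sub_zero]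

theorem maskProj_commute {b c : Bool} (h : ¬(b = true ∧ c = true)) (z w : A) :
    Commute (maskProj R A b z) (maskProj R A c w) := by
  cases b
  · exact Algebra.commute_algebraMap_left _ _
  · cases c
    · exact Algebra.commute_algebraMap_right _ _
    · exact absurd ⟨rfl, rfl⟩ h

theorem map₂_mul_tpowMul_map_comm (n : ℕ) {f g : A →ₗ[R] A} {f' g' : A →ₗ[R] TpowM R A n}
    (h : ∀ x y, Commute (f x) (g y))
    (h' : ∀ x y, tpowMul R A n (f' x) (g' y) = tpowMul R A n (g' y) (f' x))
    (z w : A ⊗[R] A) :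
    TensorProduct.map₂ (LinearMap.mul R A) (tpowMul R A n) (TensorProduct.map f f' z)
        (TensorProduct.map g g' w) =
      TensorProduct.map₂ (LinearMap.mul R A) (tpowMul R A n) (TensorProduct.map g g' w)
        (TensorProduct.map f f' z) := by
  induction z using TensorProduct.induction_on with
  | zero => simp
  | add z₁ z₂ h₁ h₂ => simp only [map_add, LinearMap.add_apply, h₁, h₂]
  | tmul x x' =>
    induction w using TensorProduct.induction_on with
    | zero => simp
    | add w₁ w₂ h₁ h₂ => simp only [map_add, LinearMap.add_apply, h₁, h₂]
    | tmul y y' => simp [(h x y).eq, h' x' y']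

theorem tpowMul_maskDelta_comm : ∀ (n : ℕ) (s t : Fin (n + 1) → Bool),
    (¬∃ i, s i = true ∧ t i = true) → ∀ u v : A,
      tpowMul R A n (maskDelta R A n s u) (maskDelta R A n t v) =
        tpowMul R A n (maskDelta R A n t v) (maskDelta R A n s u)
  | 0, _, _, hst, u, v => (maskProj_commute R A (fun h => hst ⟨0, h⟩) u v).eq
  | n + 1, s, t, hst, _, _ =>
    map₂_mul_tpowMul_map_comm R A n (maskProj_commute R A (fun h => hst ⟨0, h⟩))
      (tpowMul_maskDelta_comm n (Fin.tail s) (Fin.tail t) (fun ⟨i, h⟩ => hst ⟨i.succ, h⟩)) _ _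

theorem add_two_le_sum_toNat_add_sum_toNat {n : ℕ} {s t : Fin (n + 1) → Bool}
    (hcov : ∀ i, s i = true ∨ t i = true) (hov : ∃ i, s i = true ∧ t i = true) :
    n + 2 ≤ ∑ i, (s i).toNat + ∑ i, (t i).toNat := by
  obtain ⟨i₀, hs₀, ht₀⟩ := hov
  rw [← Finset.sum_add_distrib]
  have hlt : ∑ _i : Fin (n + 1), 1 < ∑ i, ((s i).toNat + (t i).toNat) :=
    Finset.sum_lt_sum (fun i _ => by rcases hcov i with h | h <;> simp [h])
      ⟨i₀, Finset.mem_univ _, by simp [hs₀, ht₀]⟩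
  simpa [Nat.succ_le_iff] using hlt

theorem exists_smul_tpowMul_maskDelta_eq {r : R} {a b y₁ y₂ : A}
    (ha : a ∈ gavariniDualAt R A r) (hb : b ∈ gavariniDualAt R A r)
    (hy₁ : projCounit R A a = r • y₁) (hy₂ : projCounit R A b = r • y₂)
    {n : ℕ} {s t : Fin (n + 1) → Bool}
    (hcov : ∀ i, s i = true ∨ t i = true) (hov : ∃ i, s i = true ∧ t i = true) :
    ∃ W : TpowM R A n,
      r • tpowMul R A n (maskDelta R A n s y₁) (maskDelta R A n t y₂) = r ^ (n + 1) • W := by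
  obtain ⟨i₀, hs₀, ht₀⟩ := hov
  obtain ⟨ws, hws⟩ := exists_maskDelta_eq_pow_smul R A ha n s
  obtain ⟨wt, hwt⟩ := exists_maskDelta_eq_pow_smul R A hb n t
  have hs : r • maskDelta R A n s y₁ = r ^ (∑ i, (s i).toNat) • ws := by
    rw [← map_smul, ← hy₁, maskDelta_projCounit R A ⟨i₀, hs₀⟩, hws]
  have ht : r • maskDelta R A n t y₂ = r ^ (∑ i, (t i).toNat) • wt := by
    rw [← map_smul, ← hy₂, maskDelta_projCounit R A ⟨i₀, ht₀⟩, hwt]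
  obtain ⟨k, hk⟩ : ∃ k, ∑ i, (s i).toNat = k + 1 :=
    Nat.exists_eq_add_one.mpr (Finset.sum_pos' (fun _ _ => Nat.zero_le _)
      ⟨i₀, Finset.mem_univ _, by simp [hs₀]⟩)
  obtain ⟨j, hj⟩ : ∃ j, k + ∑ i, (t i).toNat = n + 1 + j :=
    Nat.exists_eq_add_of_le
      (by linarith [add_two_le_sum_toNat_add_sum_toNat hcov ⟨i₀, hs₀, ht₀⟩])
  refine ⟨r ^ j • tpowMul R A n ws wt, ?_⟩
  -- `r` need not be a non-zero-divisor, so instead of cancelling it we move the spare factor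
  -- of `maskDelta R A n s a` onto `maskDelta R A n t y₂`.
  calc r • tpowMul R A n (maskDelta R A n s y₁) (maskDelta R A n t y₂)
      = tpowMul R A n (r • maskDelta R A n s y₁) (maskDelta R A n t y₂) := by
        rw [map_smul, LinearMap.smul_apply]
    _ = r ^ k • tpowMul R A n ws (r • maskDelta R A n t y₂) := by
        rw [hs, hk, pow_succ, mul_smul, map_smul, LinearMap.smul_apply, map_smul,
          LinearMap.smul_apply, map_smul (tpowMul R A n ws)]
    _ = r ^ (n + 1) • r ^ j • tpowMul R A n ws wt := by
        rw [ht, map_smul, smul_smul, smul_smul, ← pow_add, ← pow_add, hj]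

theorem exists_smul_sub_tpowMul_maskDelta_eq {r : R} {a b y₁ y₂ : A}
    (ha : a ∈ gavariniDualAt R A r) (hb : b ∈ gavariniDualAt R A r)
    (hy₁ : projCounit R A a = r • y₁) (hy₂ : projCounit R A b = r • y₂)
    {n : ℕ} (s t : Fin (n + 1) → Bool) :
    ∃ W : TpowM R A n, r • ((if ∀ i, s i = true ∨ t i = true then
        tpowMul R A n (maskDelta R A n s y₁) (maskDelta R A n t y₂) else 0) -
      (if ∀ i, t i = true ∨ s i = true then
        tpowMul R A n (maskDelta R A n t y₂) (maskDelta R A n s y₁) else 0)) =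
      r ^ (n + 1) • W := by
  by_cases hcov : ∀ i, s i = true ∨ t i = true
  · have hcov' : ∀ i, t i = true ∨ s i = true := fun i => (hcov i).symm
    rw [if_pos hcov, if_pos hcov']
    by_cases hov : ∃ i, s i = true ∧ t i = true
    · obtain ⟨W₁, hW₁⟩ := exists_smul_tpowMul_maskDelta_eq R A ha hb hy₁ hy₂ hcov hov
      obtain ⟨W₂, hW₂⟩ := exists_smul_tpowMul_maskDelta_eq R A hb ha hy₂ hy₁ hcov'
        (hov.imp fun _ => And.symm)
      exact ⟨W₁ - W₂, by rw [smul_sub, hW₁, hW₂, smul_sub]⟩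
    · refine ⟨0, ?_⟩
      rw [tpowMul_maskDelta_comm R A n s t hov, sub_self, smul_zero, smul_zero]
  · have hcov' : ¬∀ i, t i = true ∨ s i = true := fun h => hcov fun i => (h i).symm
    exact ⟨0, by rw [if_neg hcov, if_neg hcov', sub_self, smul_zero, smul_zero]⟩

theorem smul_commutator_mem_gavariniDualAt {r : R} {a b y₁ y₂ : A}
    (ha : a ∈ gavariniDualAt R A r) (hb : b ∈ gavariniDualAt R A r)
    (hy₁ : projCounit R A a = r • y₁) (hy₂ : projCounit R A b = r • y₂) :
    r • (y₁ * y₂ - y₂ * y₁) ∈ gavariniDualAt R A r := by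
  intro n
  have h₂₁ : deltaMap R A n (y₂ * y₁) = ∑ s, ∑ t, if ∀ i, t i = true ∨ s i = true then
      tpowMul R A n (maskDelta R A n t y₂) (maskDelta R A n s y₁) else 0 := by
    rw [deltaMap_mul, Finset.sum_comm]
  choose W hW using fun s t =>
    exists_smul_sub_tpowMul_maskDelta_eq R A ha hb hy₁ hy₂ (n := n) s t
  refine ⟨∑ s, ∑ t, W s t, ?_⟩
  simp only [map_smul, map_sub, deltaMap_mul R A n y₁ y₂, h₂₁, ← Finset.sum_sub_distrib,
    Finset.smul_sum, hW]

theorem commutator_projCounit (x z : A) :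
    projCounit R A x * projCounit R A z - projCounit R A z * projCounit R A x =
      x * z - z * x := by
  simp only [projCounit_apply, sub_mul, mul_sub, smul_mul_assoc, mul_smul_comm, one_mul, mul_one,
    smul_sub, smul_smul, mul_comm (Coalgebra.counit (R := R) x)]
  abel

theorem exists_projCounit_eq_smul_of_mem {r : R} {a : A} (ha : a ∈ gavariniDualAt R A r) :
    ∃ y : A, projCounit R A a = r • y := by
  obtain ⟨y, hy⟩ := ha 0
  rw [zero_add, pow_one] at hy
  exact ⟨y, hy⟩

theorem commutator_mem_smul_gavariniDualAt {r : R} {a b : A}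
    (ha : a ∈ gavariniDualAt R A r) (hb : b ∈ gavariniDualAt R A r) :
    ∃ c ∈ gavariniDualAt R A r, a * b - b * a = r • c := by
  obtain ⟨y₁, hy₁⟩ := exists_projCounit_eq_smul_of_mem R A ha
  obtain ⟨y₂, hy₂⟩ := exists_projCounit_eq_smul_of_mem R A hb
  refine ⟨r • (y₁ * y₂ - y₂ * y₁), smul_commutator_mem_gavariniDualAt R A ha hb hy₁ hy₂, ?_⟩
  rw [← commutator_projCounit R A, hy₁, hy₂]
  simp only [smul_mul_smul, smul_sub, mul_smul]

/-- For any `a, b` in the Drinfeld–Gavarini dual `A'` of a Hopf algebra `A` over `ℂ[ħ]`,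
the commutator `[a,b] = ab − ba` lies in `ħ·A'`. -/
theorem stmt16 (A : Type*) [Ring A] [HopfAlgebra (Polynomial ℂ) A] :
    ∀ a ∈ gavariniDual A, ∀ b ∈ gavariniDual A,
      ∃ c ∈ gavariniDual A, a * b - b * a = (Polynomial.X : Polynomial ℂ) • c :=
  fun _ ha _ hb => commutator_mem_smul_gavariniDualAt (Polynomial ℂ) A ha hb
end
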